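/- Let β > 1 and let β_m < β satisfy Σ_{β_m} ⊆ Σ_β. Define D = π_β(Σ_{β_m}) ⊆ [0,1), where π_β(ε) = Σ_i ε_i/β^i, and define g : D → [0,1) by g(x) = π_{β_m}(ε(x,β)), where ε(x,β) is the β-digit sequence of x. Then g is (log β_m / log β)-Hölder (Lipschitz with respect to the corresponding exponent) on D, and consequently dim_H E ≥ (log β_m/ log β) · dim_H g(E) for every E ⊆ D. -/

import Mathlib

open Filter MeasureTheory Set

/-- The β-transformation `T_β(x) = βx - ⌊βx⌋`. -/
noncomputable def betaT (β x : ℝ) : ℝ := Int.fract (β * x)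

/-- The `(n+1)`-st digit of the β-expansion of `x` (0-indexed):
`betaDigit β x n = ⌊β ⬝ T_β^n(x)⌋`. -/
noncomputable def betaDigit (β x : ℝ) (n : ℕ) : ℕ := (⌊β * (betaT β)^[n] x⌋).toNat

/-- The set `Σ_β^n` of β-admissible words of length `n`. -/
def admissibleWords (β : ℝ) (n : ℕ) : Set (Fin n → ℕ) :=
  {w | ∃ x ∈ Set.Ico (0:ℝ) 1, ∀ i : Fin n, betaDigit β x i = w i}

/-- The set `Σ_β` of β-admissible digit sequences. -/
def admissibleSeqs (β : ℝ) : Set (ℕ → ℕ) :=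
  {e | ∃ x ∈ Set.Ico (0:ℝ) 1, ∀ i, betaDigit β x i = e i}

/-- The cylinder `I_n(w)` of a word `w`. -/
def cylinder (β : ℝ) {n : ℕ} (w : Fin n → ℕ) : Set ℝ :=
  {x | x ∈ Set.Ico (0:ℝ) 1 ∧ ∀ i : Fin n, betaDigit β x i = w i}

/-- The partial digit sum `S_n(x,β)`. -/
noncomputable def Sdig (β x : ℝ) (n : ℕ) : ℝ := ∑ i ∈ Finset.range n, (betaDigit β x i : ℝ)

/-- The evaluation map `π_γ(ε) = Σ_{i≥1} ε_i/γ^i` (0-indexed digits). -/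
noncomputable def piBeta (γ : ℝ) (e : ℕ → ℕ) : ℝ := ∑' i : ℕ, (e i : ℝ) / γ ^ (i + 1)

/-!
A point `x` of `D` has a β-expansion that is also the β_m-expansion of `g x`. Each tail
`T_β^k x` is then `π_β` of a β_m-expansion, hence at most `β_m / β < 1`, so when `x` and `y`
first differ at digit `k` they are at least `(1 - β_m / β) β^{-(k+1)}` apart, while `g x` and
`g y` share `k` β_m-digits and are at most `β_m^{-k} = (β^{-k})^{log β_m / log β}` apart.
The dimension bound is the usual estimate for images under Hölder maps.
-/

open scoped NNReal ENNReal

theorem HolderOnWith.of_forall_exists_le {X Y : Type*} [PseudoMetricSpace X]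
    [PseudoMetricSpace Y] {f : X → Y} {s : Set X} {c : ℝ} {r : ℝ≥0} (hc : 0 < c)
    (h : ∀ x ∈ s, ∀ y ∈ s,
      ∃ t : ℝ, 0 ≤ t ∧ c * t ≤ dist x y ∧ dist (f x) (f y) ≤ t ^ (r : ℝ)) :
    HolderOnWith (c⁻¹ ^ (r : ℝ)).toNNReal r f s := by
  intro x hx y hy
  obtain ⟨t, ht, hct, hft⟩ := h x hx y hy
  have hdist : dist (f x) (f y) ≤ c⁻¹ ^ (r : ℝ) * dist x y ^ (r : ℝ) :=
    calc dist (f x) (f y) ≤ t ^ (r : ℝ) := hft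
      _ = c⁻¹ ^ (r : ℝ) * (c * t) ^ (r : ℝ) := by
        rw [← Real.mul_rpow (inv_nonneg.2 hc.le) (by positivity), inv_mul_cancel_left₀ hc.ne']
      _ ≤ c⁻¹ ^ (r : ℝ) * dist x y ^ (r : ℝ) := by gcongr
  rw [edist_dist, edist_dist, ENNReal.ofReal_rpow_of_nonneg dist_nonneg r.coe_nonneg]
  exact (ENNReal.ofReal_le_ofReal hdist).trans_eq (ENNReal.ofReal_mul (by positivity))

theorem HolderOnWith.mul_dimH_image_le {X Y : Type*} [EMetricSpace X] [EMetricSpace Y]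
    {C r : ℝ≥0} {f : X → Y} {s : Set X} (h : HolderOnWith C r f s) (hr : 0 < r) :
    (r : ℝ≥0∞) * dimH (f '' s) ≤ dimH s := by
  rw [mul_comm, ← ENNReal.le_div_iff_mul_le (Or.inl (by exact_mod_cast hr.ne'))
    (Or.inl ENNReal.coe_ne_top)]
  exact h.dimH_image_le hr

theorem inv_pow_rpow_log_div_log {a b : ℝ} (ha : 0 < a) (hb : 0 < b) (hb1 : b ≠ 1) (k : ℕ) :
    ((b ^ k)⁻¹) ^ (Real.log a / Real.log b) = (a ^ k)⁻¹ := by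
  rw [Real.log_div_log, Real.inv_rpow (by positivity), ← Real.rpow_pow_comm hb.le,
    Real.rpow_logb hb hb1 ha]

section BetaExpansion

variable {β x y : ℝ}

theorem betaT_iterate_mem_Ico (hx : x ∈ Ico (0 : ℝ) 1) (n : ℕ) :
    (betaT β)^[n] x ∈ Ico (0 : ℝ) 1 := by
  cases n with
  | zero => exact hx
  | succ n =>
    rw [Function.iterate_succ_apply']
    exact ⟨Int.fract_nonneg _, Int.fract_lt_one _⟩

theorem betaDigit_eq_sub (hβ : 0 ≤ β) (hx : x ∈ Ico (0 : ℝ) 1) (n : ℕ) :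
    (betaDigit β x n : ℝ) = β * (betaT β)^[n] x - (betaT β)^[n + 1] x := by
  have hfloor : 0 ≤ ⌊β * (betaT β)^[n] x⌋ :=
    Int.floor_nonneg.2 (mul_nonneg hβ (betaT_iterate_mem_Ico hx n).1)
  rw [Function.iterate_succ_apply', betaT, Int.fract, betaDigit, ← Int.cast_natCast,
    Int.toNat_of_nonneg hfloor]
  ring

theorem betaDigit_le (hβ : 0 ≤ β) (hx : x ∈ Ico (0 : ℝ) 1) (n : ℕ) :
    (betaDigit β x n : ℝ) ≤ β := by
  have hn := betaT_iterate_mem_Ico (β := β) hx n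
  have hn1 := betaT_iterate_mem_Ico (β := β) hx (n + 1)
  rw [betaDigit_eq_sub hβ hx]
  nlinarith [hn.2, hn1.1]

theorem betaDigit_iterate_betaT (k i : ℕ) :
    betaDigit β ((betaT β)^[k] x) i = betaDigit β x (k + i) := by
  rw [betaDigit, betaDigit, add_comm, Function.iterate_add_apply]

theorem sum_range_betaDigit_div_pow (hβ : 0 < β) (hx : x ∈ Ico (0 : ℝ) 1) (n : ℕ) :
    ∑ i ∈ Finset.range n, (betaDigit β x i : ℝ) / β ^ (i + 1)
      = x - (betaT β)^[n] x / β ^ n := by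
  induction n with
  | zero => simp
  | succ n ih =>
    rw [Finset.sum_range_succ, ih, betaDigit_eq_sub hβ.le hx n]
    field_simp
    ring

theorem summable_div_pow_of_le (hβ : 1 < β) {d : ℕ → ℕ} (hd : ∀ i, (d i : ℝ) ≤ β) :
    Summable fun i => (d i : ℝ) / β ^ (i + 1) := by
  have hβ0 : 0 < β := zero_lt_one.trans hβ
  refine .of_nonneg_of_le (fun i => by positivity) (fun i => ?_)
    (summable_geometric_of_lt_one (inv_nonneg.2 hβ0.le) (inv_lt_one_of_one_lt₀ hβ))
  calc (d i : ℝ) / β ^ (i + 1) ≤ β / β ^ (i + 1) := by gcongr; exact hd i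
    _ = β⁻¹ ^ i := by rw [pow_succ', inv_pow]; field_simp

theorem hasSum_betaDigit (hβ : 1 < β) (hx : x ∈ Ico (0 : ℝ) 1) :
    HasSum (fun i => (betaDigit β x i : ℝ) / β ^ (i + 1)) x := by
  have hβ0 : 0 < β := zero_lt_one.trans hβ
  rw [hasSum_iff_tendsto_nat_of_nonneg (fun i => by positivity)]
  simp_rw [sum_range_betaDigit_div_pow hβ0 hx]
  have htail : Tendsto (fun n => (betaT β)^[n] x / β ^ n) atTop (nhds 0) := by
    refine squeeze_zero (fun n => div_nonneg (betaT_iterate_mem_Ico hx n).1 (by positivity))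
      (fun n => ?_) (tendsto_pow_atTop_nhds_zero_of_lt_one (inv_nonneg.2 hβ0.le)
        (inv_lt_one_of_one_lt₀ hβ))
    rw [inv_pow, ← one_div]
    gcongr
    exact (betaT_iterate_mem_Ico hx n).2.le
  simpa using tendsto_const_nhds.sub htail

theorem piBeta_betaDigit (hβ : 1 < β) (hx : x ∈ Ico (0 : ℝ) 1) :
    piBeta β (betaDigit β x) = x :=
  (hasSum_betaDigit hβ hx).tsum_eq

theorem abs_sub_le_of_betaDigit_eq (hβ : 0 < β) (hx : x ∈ Ico (0 : ℝ) 1)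
    (hy : y ∈ Ico (0 : ℝ) 1) {k : ℕ} (hagree : ∀ i < k, betaDigit β x i = betaDigit β y i) :
    |x - y| ≤ (β ^ k)⁻¹ := by
  have hsum : x - (betaT β)^[k] x / β ^ k = y - (betaT β)^[k] y / β ^ k := by
    rw [← sum_range_betaDigit_div_pow hβ hx, ← sum_range_betaDigit_div_pow hβ hy]
    exact Finset.sum_congr rfl fun i hi => by rw [hagree i (Finset.mem_range.1 hi)]
  have hxk := betaT_iterate_mem_Ico (β := β) hx k
  have hyk := betaT_iterate_mem_Ico (β := β) hy k
  have hβk : 0 < β ^ k := pow_pos hβ k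
  rw [show x - y = ((betaT β)^[k] x - (betaT β)^[k] y) / β ^ k by rw [sub_div]; linarith,
    abs_div, abs_of_pos hβk, div_le_iff₀ hβk, inv_mul_cancel₀ hβk.ne']
  exact abs_le.2 ⟨by linarith [hxk.1, hyk.2], by linarith [hxk.2, hyk.1]⟩

theorem div_pow_le_sub_of_betaDigit_lt (hβ : 0 < β) (hx : x ∈ Ico (0 : ℝ) 1)
    (hy : y ∈ Ico (0 : ℝ) 1) {k : ℕ} {q : ℝ}
    (hagree : ∀ i < k, betaDigit β x i = betaDigit β y i)
    (hlt : betaDigit β x k < betaDigit β y k) (hq : (betaT β)^[k + 1] x ≤ q) :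
    (1 - q) / β ^ (k + 1) ≤ y - x := by
  have hsum : ∑ i ∈ Finset.range k, (betaDigit β x i : ℝ) / β ^ (i + 1)
      = ∑ i ∈ Finset.range k, (betaDigit β y i : ℝ) / β ^ (i + 1) :=
    Finset.sum_congr rfl fun i hi => by rw [hagree i (Finset.mem_range.1 hi)]
  have hxs := sum_range_betaDigit_div_pow hβ hx (k + 1)
  have hys := sum_range_betaDigit_div_pow hβ hy (k + 1)
  rw [Finset.sum_range_succ, hsum] at hxs
  rw [Finset.sum_range_succ] at hys
  have hdigit : (betaDigit β x k : ℝ) + 1 ≤ betaDigit β y k := by exact_mod_cast hlt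
  have hy0 := (betaT_iterate_mem_Ico (β := β) hy (k + 1)).1
  calc (1 - q) / β ^ (k + 1)
      ≤ ((betaDigit β y k : ℝ) - betaDigit β x k + (betaT β)^[k + 1] y
          - (betaT β)^[k + 1] x) / β ^ (k + 1) := by gcongr; linarith
    _ = y - x := by simp only [add_div, sub_div]; linarith

theorem div_pow_le_abs_sub_of_betaDigit_ne (hβ : 0 < β) (hx : x ∈ Ico (0 : ℝ) 1)
    (hy : y ∈ Ico (0 : ℝ) 1) {k : ℕ} {q : ℝ}
    (hagree : ∀ i < k, betaDigit β x i = betaDigit β y i)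
    (hne : betaDigit β x k ≠ betaDigit β y k)
    (hqx : (betaT β)^[k + 1] x ≤ q) (hqy : (betaT β)^[k + 1] y ≤ q) :
    (1 - q) / β ^ (k + 1) ≤ |x - y| := by
  rcases hne.lt_or_gt with hlt | hgt
  · rw [abs_sub_comm]
    exact (div_pow_le_sub_of_betaDigit_lt hβ hx hy hagree hlt hqx).trans (le_abs_self _)
  · exact (div_pow_le_sub_of_betaDigit_lt hβ hy hx (fun i hi => (hagree i hi).symm) hgt
      hqy).trans (le_abs_self _)

end BetaExpansion

section SmallerBase

variable {β βm : ℝ}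

theorem piBeta_betaDigit_le_div (hβm : 1 < βm) (hlt : βm < β) {u : ℝ}
    (hu : u ∈ Ico (0 : ℝ) 1) : piBeta β (betaDigit βm u) ≤ βm / β := by
  have hβm0 : 0 < βm := zero_lt_one.trans hβm
  have hβ0 : 0 < β := hβm0.trans hlt
  have hterm : ∀ i, (betaDigit βm u i : ℝ) / β ^ (i + 1)
      ≤ βm / β * ((betaDigit βm u i : ℝ) / βm ^ (i + 1)) := fun i =>
    calc (betaDigit βm u i : ℝ) / β ^ (i + 1) = betaDigit βm u i / β / β ^ i := by
          rw [pow_succ', div_div]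
      _ ≤ betaDigit βm u i / β / βm ^ i := by gcongr
      _ = βm / β * ((betaDigit βm u i : ℝ) / βm ^ (i + 1)) := by field_simp; ring
  have hsummable := summable_div_pow_of_le (hβm.trans hlt)
    (fun i => (betaDigit_le hβm0.le hu i).trans hlt.le)
  calc piBeta β (betaDigit βm u) ≤ βm / β * u :=
        hasSum_le hterm hsummable.hasSum ((hasSum_betaDigit hβm hu).mul_left _)
    _ ≤ βm / β := mul_le_of_le_one_right (by positivity) hu.2.le

theorem betaT_iterate_le_of_betaDigit_eq (hβm : 1 < βm) (hlt : βm < β) {x u : ℝ}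
    (hx : x ∈ Ico (0 : ℝ) 1) (hu : u ∈ Ico (0 : ℝ) 1) (h : betaDigit β x = betaDigit βm u)
    (k : ℕ) : (betaT β)^[k] x ≤ βm / β := by
  have hshift : betaDigit β ((betaT β)^[k] x) = betaDigit βm ((betaT βm)^[k] u) := by
    funext i
    rw [betaDigit_iterate_betaT, betaDigit_iterate_betaT, h]
  rw [← piBeta_betaDigit (hβm.trans hlt) (betaT_iterate_mem_Ico hx k), hshift]
  exact piBeta_betaDigit_le_div hβm hlt (betaT_iterate_mem_Ico hu k)

theorem exists_betaDigit_eq_of_mem_image_piBeta (hβ : 1 < β)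
    (hsub : admissibleSeqs βm ⊆ admissibleSeqs β) {x : ℝ}
    (hx : x ∈ piBeta β '' admissibleSeqs βm) :
    x ∈ Ico (0 : ℝ) 1 ∧ ∃ u ∈ Ico (0 : ℝ) 1, betaDigit β x = betaDigit βm u := by
  obtain ⟨e, he, rfl⟩ := hx
  obtain ⟨v, hv, hve⟩ := hsub he
  obtain ⟨u, hu, hue⟩ := he
  have hev : betaDigit β v = e := funext hve
  rw [← hev, piBeta_betaDigit hβ hv]
  exact ⟨hv, u, hu, hev.trans (funext hue).symm⟩

end SmallerBase

theorem holderOnWith_piBeta_betaDigit {β βm : ℝ} (hβm : 1 < βm) (hlt : βm < β)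
    (hsub : admissibleSeqs βm ⊆ admissibleSeqs β) :
    HolderOnWith (((1 - βm / β) / β)⁻¹ ^ (Real.log βm / Real.log β)).toNNReal
      (Real.log βm / Real.log β).toNNReal
      (fun x : ℝ => piBeta βm (betaDigit β x)) (piBeta β '' admissibleSeqs βm) := by
  have hβm0 : 0 < βm := zero_lt_one.trans hβm
  have hβ : 1 < β := hβm.trans hlt
  have hβ0 : 0 < β := zero_lt_one.trans hβ
  have hs : 0 ≤ Real.log βm / Real.log β :=
    div_nonneg (Real.log_nonneg hβm.le) (Real.log_nonneg hβ.le)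
  have hc : 0 < (1 - βm / β) / β := div_pos (sub_pos.2 ((div_lt_one hβ0).2 hlt)) hβ0
  have key := HolderOnWith.of_forall_exists_le (r := (Real.log βm / Real.log β).toNNReal)
    (f := fun x : ℝ => piBeta βm (betaDigit β x)) (s := piBeta β '' admissibleSeqs βm) hc
  rw [Real.coe_toNNReal _ hs] at key
  refine key fun x hx y hy => ?_
  by_cases hxy : x = y
  · subst hxy
    exact ⟨0, le_rfl, by simp, by simpa using Real.rpow_nonneg le_rfl _⟩
  obtain ⟨hx01, u, hu, hxu⟩ := exists_betaDigit_eq_of_mem_image_piBeta hβ hsub hx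
  obtain ⟨hy01, w, hw, hyw⟩ := exists_betaDigit_eq_of_mem_image_piBeta hβ hsub hy
  have hdiff : ∃ i, betaDigit β x i ≠ betaDigit β y i := Function.ne_iff.1 fun h =>
    hxy (by rw [← piBeta_betaDigit hβ hx01, h, piBeta_betaDigit hβ hy01])
  classical
  set k := Nat.find hdiff
  have hagree : ∀ i < k, betaDigit β x i = betaDigit β y i := fun i hi =>
    not_ne_iff.1 (Nat.find_min hdiff hi)
  refine ⟨(β ^ k)⁻¹, by positivity, ?_, ?_⟩
  · calc (1 - βm / β) / β * (β ^ k)⁻¹ = (1 - βm / β) / β ^ (k + 1) := by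
          rw [pow_succ']; field_simp
      _ ≤ dist x y := div_pow_le_abs_sub_of_betaDigit_ne hβ0 hx01 hy01 hagree
          (Nat.find_spec hdiff) (betaT_iterate_le_of_betaDigit_eq hβm hlt hx01 hu hxu _)
          (betaT_iterate_le_of_betaDigit_eq hβm hlt hy01 hw hyw _)
  · simp only [hxu, hyw, piBeta_betaDigit hβm hu, piBeta_betaDigit hβm hw, Real.dist_eq]
    rw [inv_pow_rpow_log_div_log hβm0 hβ0 hβ.ne']
    refine abs_sub_le_of_betaDigit_eq hβm0 hu hw fun i hi => ?_
    rw [← congrFun hxu i, ← congrFun hyw i]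
    exact hagree i hi

/-- Let `β_m < β` with `Σ_{β_m} ⊆ Σ_β`, `D = π_β(Σ_{β_m})`, and
`g(x) = π_{β_m}(ε(x,β))`. Then `g` is `(log β_m / log β)`-Hölder on `D`, and
`dim_H E ≥ (log β_m / log β) · dim_H g(E)` for every `E ⊆ D`. -/
theorem stmt19 (β βm : ℝ) (hβm : 1 < βm) (hlt : βm < β)
    (hsub : admissibleSeqs βm ⊆ admissibleSeqs β) :
    (∃ C : NNReal, HolderOnWith C (Real.toNNReal (Real.log βm / Real.log β))
      (fun x : ℝ => piBeta βm (betaDigit β x)) (piBeta β '' admissibleSeqs βm)) ∧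
    ∀ E ⊆ piBeta β '' admissibleSeqs βm,
      ENNReal.ofReal (Real.log βm / Real.log β) *
        dimH ((fun x : ℝ => piBeta βm (betaDigit β x)) '' E) ≤ dimH E := by
  have hs : 0 < Real.log βm / Real.log β :=
    div_pos (Real.log_pos hβm) (Real.log_pos (hβm.trans hlt))
  have hholder := holderOnWith_piBeta_betaDigit hβm hlt hsub
  exact ⟨⟨_, hholder⟩, fun E hE =>
    (hholder.mono hE).mul_dimH_image_le (Real.toNNReal_pos.2 hs)⟩
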